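/- In the setup of two homogeneous compressed Gorenstein ideals I1, I2 in the power series ring in e ≥ 3 variables with R = Q/(I1 ∩ I2) compressed of type 2: if the socle degrees satisfy s1 = 2, or s1 = 3 = s2, then Q/(I1 + I2) = Q/q^2. -/

import Mathlib

/-!
Everything is graded, so `q² ⊆ I1 + I2` can be checked one degree `j` at a time, and only
`2 ≤ j ≤ s1` matters because `q^(s1+1) ⊆ I1`. In degree `j` the two components span `Q_j` as soon
as `h_{Q/(I1 ∩ I2)}(j) ≥ h_{Q/I1}(j) + h_{Q/I2}(j)`, and type two gives `h_{Q/J}(m) ≥ 2` whenever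
the socle of `Q/J` lies in degree `m`.

If `s1 = 2`, `(I1)_2` is a hyperplane of `Q_2`; if `(I2)_2` lay in it, then `I2 ⊆ I1` and
`Q/(I1 ∩ I2) = Q/I2` would be Gorenstein rather than of type two. If `s1 = s2 = 3`, both socles,
hence the socle of `Q/(I1 ∩ I2)`, sit in degree `3`: type two gives `h(3) ≥ 2 = 1 + 1`, and
compressedness of `Q/(I1 ∩ I2)` then forces `h(2) = 2e = e + e`.
-/

open MvPolynomial

/-- The ideal generated by the variables (the graded maximal ideal `q`). -/
noncomputable def qIdeal (k : Type*) [Field k] (e : ℕ) : Ideal (MvPolynomial (Fin e) k) :=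
  Ideal.span (Set.range X)

/-- The Hilbert function of `Q/J`: `h(i) = dim_k (q^i + J)/(q^{i+1} + J)`. -/
noncomputable def hilb (k : Type*) [Field k] (e : ℕ)
    (J : Ideal (MvPolynomial (Fin e) k)) (i : ℕ) : ℕ :=
  Module.finrank k
    (((qIdeal k e ^ i ⊔ J).map (Ideal.Quotient.mk (qIdeal k e ^ (i + 1) ⊔ J))).restrictScalars k)

/-- An ideal is homogeneous if it is generated by homogeneous polynomials. -/
def IsHomogeneousIdeal (k : Type*) [Field k] (e : ℕ)
    (J : Ideal (MvPolynomial (Fin e) k)) : Prop :=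
  ∃ S : Set (MvPolynomial (Fin e) k),
    (∀ p ∈ S, ∃ n, MvPolynomial.IsHomogeneous p n) ∧ J = Ideal.span S

/-- Hilbert function of the ambient ring: `h_Q(i) = binom(e−1+i, e−1)`. -/
def hQ (e i : ℕ) : ℕ := Nat.choose (e - 1 + i) (e - 1)

/-- `h_Q(σ − i)`, interpreted as `0` for `i > σ`. -/
def hQat (e σ i : ℕ) : ℕ := if i ≤ σ then hQ e (σ - i) else 0

/-- `Q/J` has type 1 (is artinian Gorenstein): the socle `(J : q)/J` is spanned
by one nonzero element. -/
def HasTypeOne (k : Type*) [Field k] (e : ℕ) (J : Ideal (MvPolynomial (Fin e) k)) : Prop :=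
  ∃ x, x ∉ J ∧ J.colon (qIdeal k e) = J ⊔ Ideal.span {x}

/-- `Q/J` has type 2: the socle `(J : q)/J` is spanned by two elements whose
cosets are linearly independent over `k`. -/
def HasTypeTwo (k : Type*) [Field k] (e : ℕ) (J : Ideal (MvPolynomial (Fin e) k)) : Prop :=
  ∃ x y, J.colon (qIdeal k e) = J ⊔ Ideal.span {x, y} ∧
    ∀ a b : MvPolynomial (Fin e) k, a * x + b * y ∈ J →
      a ∈ qIdeal k e ∧ b ∈ qIdeal k e

/-- `σ` is the socle degree of `Q/J`. -/
def SocDeg (k : Type*) [Field k] (e : ℕ) (J : Ideal (MvPolynomial (Fin e) k)) (σ : ℕ) : Prop :=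
  ¬ qIdeal k e ^ σ ≤ J ∧ qIdeal k e ^ (σ + 1) ≤ J

/-- `τ` is the initial degree of `J`. -/
def IniDeg (k : Type*) [Field k] (e : ℕ) (J : Ideal (MvPolynomial (Fin e) k)) (τ : ℕ) : Prop :=
  J ≤ qIdeal k e ^ τ ∧ ¬ J ≤ qIdeal k e ^ (τ + 1)

/-- `Q/J` is a compressed Gorenstein ring of socle degree `σ`. -/
def CompressedGor (k : Type*) [Field k] (e : ℕ) (J : Ideal (MvPolynomial (Fin e) k)) (σ : ℕ) : Prop :=
  ∀ i, hilb k e J i = min (hQ e i) (hQat e σ i)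

attribute [local instance] MvPolynomial.gradedAlgebra

instance MvPolynomial.finite_homogeneousSubmodule {σ R : Type*} [Finite σ] [CommSemiring R]
    (n : ℕ) : Module.Finite R (homogeneousSubmodule σ R n) :=
  Module.Finite.iff_fg.mpr (homogeneousSubmodule_fg σ R n)

theorem hQ_pos (e i : ℕ) : 0 < hQ e i :=
  Nat.choose_pos (by omega)

theorem two_mul_hQ_one_le_hQ_two {e : ℕ} (he : 3 ≤ e) : 2 * hQ e 1 ≤ hQ e 2 := by
  obtain ⟨n, rfl⟩ : ∃ n, e = n + 3 := ⟨e - 3, by omega⟩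
  simp only [hQ, show n + 3 - 1 = n + 2 by omega, Nat.choose_succ_self_right]
  rw [Nat.choose_symm_add, Nat.choose_two_right, Nat.le_div_iff_mul_le two_pos,
    show n + 2 + 2 - 1 = n + 3 by omega]
  nlinarith

theorem hQat_self (e σ : ℕ) : hQat e σ σ = 1 := by
  simp [hQat, hQ]

theorem hQat_of_lt {e σ i : ℕ} (h : σ < i) : hQat e σ i = 0 :=
  if_neg (by omega)

section

variable {k : Type*} [Field k] {e : ℕ}

local notation "𝔮" => qIdeal k e
local notation "𝒬" => homogeneousSubmodule (Fin e) k

theorem mem_qIdeal_pow_iff {m : ℕ} {f : MvPolynomial (Fin e) k} :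
    f ∈ 𝔮 ^ m ↔ ∀ d, d.degree < m → coeff d f = 0 :=
  mem_pow_idealOfVars_iff' m f

theorem C_mem_qIdeal_iff {c : k} : C c ∈ 𝔮 ↔ c = 0 := by
  rw [← pow_one 𝔮]
  exact (C_mem_pow_idealOfVars_iff 1 c).trans (or_iff_left one_ne_zero)

theorem one_notMem_qIdeal : (1 : MvPolynomial (Fin e) k) ∉ 𝔮 := by
  simpa using (C_mem_qIdeal_iff (e := e) (c := (1 : k))).not.mpr one_ne_zero

theorem sub_C_constantCoeff_mem_qIdeal (a : MvPolynomial (Fin e) k) :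
    a - C (constantCoeff a) ∈ 𝔮 := by
  rw [← pow_one 𝔮, mem_qIdeal_pow_iff]
  intro d hd
  obtain rfl : d = 0 := (Finsupp.degree_eq_zero_iff d).mp (Nat.lt_one_iff.mp hd)
  simp [constantCoeff_eq]

theorem isHomogeneous_qIdeal_pow (m : ℕ) : (𝔮 ^ m).IsHomogeneous 𝒬 := by
  induction m with
  | zero => simpa using Ideal.IsHomogeneous.top 𝒬
  | succ m ih =>
    rw [pow_succ]
    exact ih.mul <| Ideal.homogeneous_span 𝒬 _ <| by
      rintro _ ⟨i, rfl⟩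
      exact ⟨1, isHomogeneous_X k i⟩

theorem mem_qIdeal_pow_of_mem_homogeneousSubmodule {j m : ℕ} {z : MvPolynomial (Fin e) k}
    (hz : z ∈ 𝒬 j) (hm : m ≤ j) : z ∈ 𝔮 ^ m :=
  mem_qIdeal_pow_iff.mpr fun _ hd ↦ ((mem_homogeneousSubmodule j z).mp hz).coeff_eq_zero (by omega)

theorem homogeneousComponent_eq_zero_of_mem_qIdeal_pow {j m : ℕ} {f : MvPolynomial (Fin e) k}
    (hf : f ∈ 𝔮 ^ m) (hj : j < m) : homogeneousComponent j f = 0 :=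
  homogeneousComponent_eq_zero' _ _ fun d hd ↦
    ((mem_pow_idealOfVars_iff m f).mp hf d hd).trans_lt' hj |>.ne'

theorem eq_zero_of_mem_homogeneousSubmodule_of_mem_qIdeal_pow {j m : ℕ}
    {z : MvPolynomial (Fin e) k} (hz : z ∈ 𝒬 j) (hzm : z ∈ 𝔮 ^ m) (hj : j < m) : z = 0 := by
  simpa [homogeneousComponent_of_mem hz] using
    homogeneousComponent_eq_zero_of_mem_qIdeal_pow hzm hj

theorem sub_homogeneousComponent_mem_qIdeal_pow_succ {m : ℕ} {f : MvPolynomial (Fin e) k}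
    (hf : f ∈ 𝔮 ^ m) : f - homogeneousComponent m f ∈ 𝔮 ^ (m + 1) := by
  refine mem_qIdeal_pow_iff.mpr fun d hd ↦ ?_
  rw [coeff_sub, coeff_homogeneousComponent]
  split_ifs with hdm
  · exact sub_self _
  · rw [mem_qIdeal_pow_iff.mp hf d (by omega), sub_zero]

theorem mem_of_mem_sup_qIdeal_pow {J : Ideal (MvPolynomial (Fin e) k)} (hJ : J.IsHomogeneous 𝒬)
    {j m : ℕ} {z : MvPolynomial (Fin e) k} (hz : z ∈ 𝒬 j) (hj : j < m) (h : z ∈ J ⊔ 𝔮 ^ m) :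
    z ∈ J := by
  obtain ⟨u, hu, v, hv, rfl⟩ := Submodule.mem_sup.mp h
  have hcomp := homogeneousComponent_of_mem (m := j) hz
  rw [if_pos rfl, map_add, homogeneousComponent_eq_zero_of_mem_qIdeal_pow hv hj, add_zero] at hcomp
  exact hcomp ▸ homogeneousComponent_mem_of_mem hJ hu j

theorem le_of_forall_mem_homogeneousSubmodule {I J : Ideal (MvPolynomial (Fin e) k)}
    (hI : I.IsHomogeneous 𝒬) (h : ∀ j, ∀ z ∈ 𝒬 j, z ∈ I → z ∈ J) : I ≤ J := fun f hf ↦ by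
  rw [← sum_homogeneousComponent f]
  exact J.sum_mem fun j _ ↦
    h j _ (homogeneousComponent_mem j f) (homogeneousComponent_mem_of_mem hI hf j)

theorem qIdeal_pow_le_of_forall_mem_homogeneousSubmodule {I : Ideal (MvPolynomial (Fin e) k)}
    {m n : ℕ} (hn : 𝔮 ^ (n + 1) ≤ I) (h : ∀ j, m ≤ j → j ≤ n → ∀ z ∈ 𝒬 j, z ∈ I) :
    𝔮 ^ m ≤ I := by
  refine le_of_forall_mem_homogeneousSubmodule (isHomogeneous_qIdeal_pow m) fun j z hz hzm ↦ ?_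
  rcases lt_or_ge j m with hjm | hmj
  · rw [eq_zero_of_mem_homogeneousSubmodule_of_mem_qIdeal_pow hz hzm hjm]
    exact I.zero_mem
  rcases le_or_gt j n with hjn | hnj
  · exact h j hmj hjn z hz
  · exact hn (mem_qIdeal_pow_of_mem_homogeneousSubmodule hz hnj)

theorem sup_qIdeal_pow_inf_sup_qIdeal_pow_le {A B : Ideal (MvPolynomial (Fin e) k)}
    (hA : A.IsHomogeneous 𝒬) (hB : B.IsHomogeneous 𝒬) (m : ℕ) :
    (A ⊔ 𝔮 ^ m) ⊓ (B ⊔ 𝔮 ^ m) ≤ A ⊓ B ⊔ 𝔮 ^ m := by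
  refine le_of_forall_mem_homogeneousSubmodule
    ((hA.sup (isHomogeneous_qIdeal_pow m)).inf (hB.sup (isHomogeneous_qIdeal_pow m)))
    fun j z hz ⟨hzA, hzB⟩ ↦ ?_
  rcases lt_or_ge j m with hjm | hmj
  · exact Submodule.mem_sup_left
      ⟨mem_of_mem_sup_qIdeal_pow hA hz hjm hzA, mem_of_mem_sup_qIdeal_pow hB hz hjm hzB⟩
  · exact Submodule.mem_sup_right (mem_qIdeal_pow_of_mem_homogeneousSubmodule hz hmj)

noncomputable def degreePart (J : Ideal (MvPolynomial (Fin e) k)) (i : ℕ) : Submodule k (𝒬 i) :=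
  (J.restrictScalars k).comap (𝒬 i).subtype

theorem mem_degreePart {J : Ideal (MvPolynomial (Fin e) k)} {i : ℕ} {z : 𝒬 i} :
    z ∈ degreePart J i ↔ (z : MvPolynomial (Fin e) k) ∈ J :=
  Iff.rfl

theorem degreePart_inf (I J : Ideal (MvPolynomial (Fin e) k)) (i : ℕ) :
    degreePart (I ⊓ J) i = degreePart I i ⊓ degreePart J i :=
  rfl

noncomputable def degreeMap (J : Ideal (MvPolynomial (Fin e) k)) (i : ℕ) :
    𝒬 i →ₗ[k] MvPolynomial (Fin e) k ⧸ (𝔮 ^ (i + 1) ⊔ J) :=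
  (Ideal.Quotient.mkₐ k _).toLinearMap ∘ₗ (𝒬 i).subtype

theorem range_degreeMap (J : Ideal (MvPolynomial (Fin e) k)) (i : ℕ) :
    LinearMap.range (degreeMap J i) =
      ((𝔮 ^ i ⊔ J).map (Ideal.Quotient.mk (𝔮 ^ (i + 1) ⊔ J))).restrictScalars k := by
  refine le_antisymm ?_ fun w hw ↦ ?_
  · rintro _ ⟨z, rfl⟩
    exact Ideal.mem_map_of_mem _ <|
      Submodule.mem_sup_left (mem_qIdeal_pow_of_mem_homogeneousSubmodule z.2 le_rfl)
  obtain ⟨f, hf, rfl⟩ := (Ideal.mem_map_iff_of_surjective _ Ideal.Quotient.mk_surjective).mp hw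
  obtain ⟨g, hg, h, hh, rfl⟩ := Submodule.mem_sup.mp hf
  refine ⟨⟨homogeneousComponent i g, homogeneousComponent_mem i g⟩, ?_⟩
  refine Ideal.Quotient.eq.mpr ?_
  change homogeneousComponent i g - (g + h) ∈ _
  rw [show homogeneousComponent i g - (g + h) = -(g - homogeneousComponent i g + h) by ring]
  exact neg_mem <| add_mem
    (Submodule.mem_sup_left (sub_homogeneousComponent_mem_qIdeal_pow_succ hg))
    (Submodule.mem_sup_right hh)

theorem ker_degreeMap {J : Ideal (MvPolynomial (Fin e) k)} (hJ : J.IsHomogeneous 𝒬) (i : ℕ) :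
    LinearMap.ker (degreeMap J i) = degreePart J i := by
  ext z
  refine LinearMap.mem_ker.trans <| Ideal.Quotient.eq_zero_iff_mem.trans ⟨fun h ↦ ?_, fun h ↦ ?_⟩
  · exact mem_of_mem_sup_qIdeal_pow hJ z.2 i.lt_succ_self (sup_comm (𝔮 ^ (i + 1)) J ▸ h)
  · exact Submodule.mem_sup_right h

theorem hilb_add_finrank_degreePart {J : Ideal (MvPolynomial (Fin e) k)}
    (hJ : J.IsHomogeneous 𝒬) (i : ℕ) :
    hilb k e J i + Module.finrank k (degreePart J i) = Module.finrank k (𝒬 i) := by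
  rw [hilb, ← range_degreeMap, ← ker_degreeMap hJ]
  exact LinearMap.finrank_range_add_finrank_ker _

theorem mem_sup_of_degreePart_sup_eq_top {I J : Ideal (MvPolynomial (Fin e) k)} {i : ℕ}
    (h : degreePart I i ⊔ degreePart J i = ⊤) {z : MvPolynomial (Fin e) k} (hz : z ∈ 𝒬 i) :
    z ∈ I ⊔ J := by
  obtain ⟨a, ha, b, hb, hab⟩ := Submodule.mem_sup.mp (h ▸ Submodule.mem_top : ⟨z, hz⟩ ∈ _)
  rw [← show (a : MvPolynomial (Fin e) k) + b = z from congrArg Subtype.val hab]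
  exact Submodule.add_mem_sup ha hb

theorem degreePart_sup_eq_top_of_hilb_add_le {I J : Ideal (MvPolynomial (Fin e) k)}
    (hI : I.IsHomogeneous 𝒬) (hJ : J.IsHomogeneous 𝒬) {i : ℕ}
    (h : hilb k e I i + hilb k e J i ≤ hilb k e (I ⊓ J) i) :
    degreePart I i ⊔ degreePart J i = ⊤ := by
  have hdim := Submodule.finrank_sup_add_finrank_inf_eq (degreePart I i) (degreePart J i)
  have hle := Submodule.finrank_le (degreePart I i ⊔ degreePart J i)
  have hI' := hilb_add_finrank_degreePart hI i
  have hJ' := hilb_add_finrank_degreePart hJ i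
  have hIJ := hilb_add_finrank_degreePart (hI.inf hJ) i
  rw [degreePart_inf] at hIJ
  exact Submodule.eq_top_of_finrank_eq (by omega)

theorem degreePart_sup_eq_top_of_hilb_eq_one {I J : Ideal (MvPolynomial (Fin e) k)}
    (hI : I.IsHomogeneous 𝒬) {i : ℕ} (h : hilb k e I i = 1)
    (hJI : ¬ degreePart J i ≤ degreePart I i) :
    degreePart I i ⊔ degreePart J i = ⊤ := by
  have hlt := Submodule.finrank_lt_finrank_of_lt (left_lt_sup.mpr hJI)
  have hle := Submodule.finrank_le (degreePart I i ⊔ degreePart J i)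
  have hI' := hilb_add_finrank_degreePart hI i
  exact Submodule.eq_top_of_finrank_eq (by omega)

theorem SocDeg.unique {J : Ideal (MvPolynomial (Fin e) k)} {σ τ : ℕ} (hσ : SocDeg k e J σ)
    (hτ : SocDeg k e J τ) : σ = τ := by
  by_contra hne
  rcases Nat.lt_or_gt_of_ne hne with h | h
  · exact hτ.1 ((Ideal.pow_le_pow_right h).trans hσ.2)
  · exact hσ.1 ((Ideal.pow_le_pow_right h).trans hτ.2)

theorem qIdeal_pow_le_colon {J : Ideal (MvPolynomial (Fin e) k)} {σ : ℕ}
    (h : 𝔮 ^ (σ + 1) ≤ J) : 𝔮 ^ σ ≤ J.colon 𝔮 := fun _ hz ↦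
  Submodule.mem_colon.mpr fun _ hs ↦ h (pow_succ 𝔮 σ ▸ Ideal.mul_mem_mul hz hs)

theorem exists_sub_C_mul_mem_of_mem_sup_span_singleton {J : Ideal (MvPolynomial (Fin e) k)}
    {x y : MvPolynomial (Fin e) k} (hx : x ∈ J.colon 𝔮) (hy : y ∈ J ⊔ Ideal.span {x}) :
    ∃ c : k, y - C c * x ∈ J := by
  obtain ⟨w, hw, z, hz, rfl⟩ := Submodule.mem_sup.mp hy
  obtain ⟨a, rfl⟩ := Ideal.mem_span_singleton'.mp hz
  refine ⟨constantCoeff a, ?_⟩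
  rw [add_sub_assoc, ← sub_mul, mul_comm]
  exact add_mem hw (Submodule.mem_colon.mp hx _ (sub_C_constantCoeff_mem_qIdeal a))

theorem mem_sup_span_singleton_of_colon_eq {J : Ideal (MvPolynomial (Fin e) k)}
    {x t : MvPolynomial (Fin e) k} (hcol : J.colon 𝔮 = J ⊔ Ideal.span {x})
    (ht : t ∈ J.colon 𝔮) (htJ : t ∉ J) : x ∈ J ⊔ Ideal.span {t} := by
  have hx : x ∈ J.colon 𝔮 := hcol ▸ Submodule.mem_sup_right (Ideal.mem_span_singleton_self x)
  obtain ⟨c, hc⟩ := exists_sub_C_mul_mem_of_mem_sup_span_singleton hx (hcol ▸ ht)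
  have hc0 : c ≠ 0 := by
    rintro rfl
    simp_all
  rw [show x = C c⁻¹ * t - C c⁻¹ * (t - C c * x) by
    rw [mul_sub, sub_sub_cancel, ← mul_assoc, ← C_mul, inv_mul_cancel₀ hc0, C_1, one_mul]]
  exact sub_mem (Submodule.mem_sup_right (Ideal.mul_mem_left _ _ (Ideal.mem_span_singleton_self t)))
    (Submodule.mem_sup_left (Ideal.mul_mem_left _ _ hc))

theorem colon_qIdeal_eq_sup_qIdeal_pow {J : Ideal (MvPolynomial (Fin e) k)} {σ : ℕ}
    (hJ : HasTypeOne k e J) (hσ : SocDeg k e J σ) : J.colon 𝔮 = J ⊔ 𝔮 ^ σ := by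
  obtain ⟨x, -, hcol⟩ := hJ
  obtain ⟨t, ht, htJ⟩ := SetLike.not_le_iff_exists.mp hσ.1
  refine le_antisymm ?_ (sup_le Ideal.le_colon (qIdeal_pow_le_colon hσ.2))
  rw [hcol]
  refine sup_le le_sup_left ((Ideal.span_singleton_le_iff_mem _).mpr ?_)
  exact sup_le_sup_left ((Ideal.span_singleton_le_iff_mem _).mpr ht) J
    (mem_sup_span_singleton_of_colon_eq hcol (qIdeal_pow_le_colon hσ.2 ht) htJ)

theorem not_hasTypeTwo_of_hasTypeOne {J : Ideal (MvPolynomial (Fin e) k)}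
    (hJ : HasTypeOne k e J) : ¬ HasTypeTwo k e J := by
  rintro ⟨x, y, hcol, hind⟩
  obtain ⟨x₀, -, hcol₀⟩ := hJ
  have hx : x ∈ J.colon 𝔮 := hcol ▸ Submodule.mem_sup_right (Ideal.subset_span (by simp))
  have hy : y ∈ J.colon 𝔮 := hcol ▸ Submodule.mem_sup_right (Ideal.subset_span (by simp))
  have hxJ : x ∉ J := fun h ↦ one_notMem_qIdeal (hind 1 0 (by simpa using h)).1
  have hx₀ := mem_sup_span_singleton_of_colon_eq hcol₀ hx hxJ
  have hyx : y ∈ J ⊔ Ideal.span {x} := by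
    rw [hcol₀] at hy
    exact sup_le le_sup_left ((Ideal.span_singleton_le_iff_mem _).mpr hx₀) hy
  obtain ⟨c, hc⟩ := exists_sub_C_mul_mem_of_mem_sup_span_singleton hx hyx
  exact one_notMem_qIdeal (hind (-C c) 1 (by simpa [sub_eq_neg_add] using hc)).2

theorem two_le_hilb_of_hasTypeTwo {J : Ideal (MvPolynomial (Fin e) k)} {m : ℕ}
    (hJ : HasTypeTwo k e J) (hsoc : J.colon 𝔮 ≤ J ⊔ 𝔮 ^ m) (hm : 𝔮 ^ (m + 1) ≤ J) :
    2 ≤ hilb k e J m := by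
  obtain ⟨x, y, hcol, hind⟩ := hJ
  let π := Ideal.Quotient.mk (𝔮 ^ (m + 1) ⊔ J)
  have hrange : ∀ z ∈ J.colon 𝔮, π z ∈ LinearMap.range (degreeMap J m) := fun z hz ↦ by
    rw [range_degreeMap]
    exact Ideal.mem_map_of_mem _ (sup_comm J (𝔮 ^ m) ▸ hsoc hz)
  have hsocle : ∀ i, ![π x, π y] i ∈ LinearMap.range (degreeMap J m) := by
    intro i
    fin_cases i <;> exact hrange _ (hcol ▸ Submodule.mem_sup_right (Ideal.subset_span (by simp)))
  have hindep : LinearIndependent k ![π x, π y] := by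
    refine LinearIndependent.pair_iff.mpr fun a b hab ↦ ?_
    rw [Algebra.smul_def, Algebra.smul_def, ← Ideal.Quotient.mk_algebraMap,
      ← Ideal.Quotient.mk_algebraMap, MvPolynomial.algebraMap_eq, ← map_mul, ← map_mul, ← map_add,
      Ideal.Quotient.eq_zero_iff_mem, sup_eq_right.mpr hm] at hab
    obtain ⟨ha, hb⟩ := hind _ _ hab
    exact ⟨C_mem_qIdeal_iff.mp ha, C_mem_qIdeal_iff.mp hb⟩
  rw [hilb, ← range_degreeMap]
  calc 2 = Module.finrank k (Submodule.span k (Set.range ![π x, π y])) := by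
        rw [finrank_span_eq_card hindep, Fintype.card_fin]
    _ ≤ _ := Submodule.finrank_mono <| Submodule.span_le.mpr <| Set.range_subset_iff.mpr hsocle

theorem hilb_eq_one_of_compressedGor {J : Ideal (MvPolynomial (Fin e) k)} {σ : ℕ}
    (hJ : CompressedGor k e J σ) : hilb k e J σ = 1 := by
  rw [hJ σ, hQat_self, min_eq_right (hQ_pos e σ)]

theorem hilb_two_eq_of_compressedGor_three (he : 3 ≤ e) {J : Ideal (MvPolynomial (Fin e) k)}
    (hJ : CompressedGor k e J 3) : hilb k e J 2 = hQ e 1 := by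
  have := two_mul_hQ_one_le_hQ_two he
  rw [hJ 2, show hQat e 3 2 = hQ e 1 from rfl]
  omega

theorem IsHomogeneousIdeal.isHomogeneous {J : Ideal (MvPolynomial (Fin e) k)}
    (hJ : IsHomogeneousIdeal k e J) : J.IsHomogeneous 𝒬 := by
  obtain ⟨S, hS, rfl⟩ := hJ
  exact Ideal.homogeneous_span 𝒬 S fun p hp ↦ hS p hp

theorem qIdeal_sq_le_sup_of_socDeg_eq_two {I1 I2 : Ideal (MvPolynomial (Fin e) k)}
    (h1hom : I1.IsHomogeneous 𝒬) (h2hom : I2.IsHomogeneous 𝒬) (h2q2 : I2 ≤ 𝔮 ^ 2)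
    (h2gor : HasTypeOne k e I2) (hs1 : SocDeg k e I1 2) (h1c : CompressedGor k e I1 2)
    (htype2 : HasTypeTwo k e (I1 ⊓ I2)) : 𝔮 ^ 2 ≤ I1 ⊔ I2 := by
  have hquadric : ¬ degreePart I2 2 ≤ degreePart I1 2 := by
    intro h
    have hle : I2 ≤ I1 := le_of_forall_mem_homogeneousSubmodule h2hom fun j z hz hzI2 ↦ by
      rcases lt_trichotomy j 2 with hj | rfl | hj
      · rw [eq_zero_of_mem_homogeneousSubmodule_of_mem_qIdeal_pow hz (h2q2 hzI2) hj]
        exact I1.zero_mem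
      · exact h (mem_degreePart.mpr hzI2 : ⟨z, hz⟩ ∈ degreePart I2 2)
      · exact hs1.2 (mem_qIdeal_pow_of_mem_homogeneousSubmodule hz hj)
    exact not_hasTypeTwo_of_hasTypeOne h2gor (inf_eq_right.mpr hle ▸ htype2)
  have htop := degreePart_sup_eq_top_of_hilb_eq_one h1hom (hilb_eq_one_of_compressedGor h1c)
    hquadric
  refine qIdeal_pow_le_of_forall_mem_homogeneousSubmodule (le_sup_of_le_left hs1.2) ?_
  intro j hj2 hj2' z hz
  obtain rfl : j = 2 := le_antisymm hj2' hj2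
  exact mem_sup_of_degreePart_sup_eq_top htop hz

theorem qIdeal_sq_le_sup_of_socDeg_eq_three (he : 3 ≤ e) {I1 I2 : Ideal (MvPolynomial (Fin e) k)}
    (h1hom : I1.IsHomogeneous 𝒬) (h2hom : I2.IsHomogeneous 𝒬)
    (h1gor : HasTypeOne k e I1) (h2gor : HasTypeOne k e I2)
    (hs1 : SocDeg k e I1 3) (hs2 : SocDeg k e I2 3)
    (h1c : CompressedGor k e I1 3) (h2c : CompressedGor k e I2 3)
    (htype2 : HasTypeTwo k e (I1 ⊓ I2)) {s : ℕ} (hs : SocDeg k e (I1 ⊓ I2) s)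
    (hcomp : ∃ b ≤ s, ∀ i, hilb k e (I1 ⊓ I2) i = min (hQ e i) (hQat e b i + hQat e s i)) :
    𝔮 ^ 2 ≤ I1 ⊔ I2 := by
  have hq4 : 𝔮 ^ 4 ≤ I1 ⊓ I2 := le_inf hs1.2 hs2.2
  have hsoc : (I1 ⊓ I2).colon 𝔮 ≤ I1 ⊓ I2 ⊔ 𝔮 ^ 3 := by
    rw [Submodule.inf_colon, colon_qIdeal_eq_sup_qIdeal_pow h1gor hs1,
      colon_qIdeal_eq_sup_qIdeal_pow h2gor hs2]
    exact sup_qIdeal_pow_inf_sup_qIdeal_pow_le h1hom h2hom 3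
  have h3 : 2 ≤ hilb k e (I1 ⊓ I2) 3 := two_le_hilb_of_hasTypeTwo htype2 hsoc hq4
  obtain rfl : s = 3 := hs.unique ⟨fun h ↦ hs2.1 (h.trans inf_le_right), hq4⟩
  obtain ⟨b, hb, hJ⟩ := hcomp
  obtain rfl : b = 3 := by
    by_contra hb3
    have := hJ 3
    rw [hQat_of_lt (by omega : b < 3), hQat_self] at this
    omega
  have h2 : hilb k e (I1 ⊓ I2) 2 = 2 * hQ e 1 := by
    rw [hJ 2, show hQat e 3 2 = hQ e 1 from rfl, ← two_mul]
    exact min_eq_right (two_mul_hQ_one_le_hQ_two he)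
  refine qIdeal_pow_le_of_forall_mem_homogeneousSubmodule (le_sup_of_le_left hs1.2) ?_
  intro j hj2 hj3 z hz
  refine mem_sup_of_degreePart_sup_eq_top
    (degreePart_sup_eq_top_of_hilb_add_le h1hom h2hom ?_) hz
  obtain rfl | rfl : j = 2 ∨ j = 3 := by omega
  · rw [hilb_two_eq_of_compressedGor_three he h1c, hilb_two_eq_of_compressedGor_three he h2c, h2]
    omega
  · rw [hilb_eq_one_of_compressedGor h1c, hilb_eq_one_of_compressedGor h2c]
    exact h3

end

theorem stmt14_general (k : Type*) [Field k] (e : ℕ) (he : 3 ≤ e)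
    (I1 I2 : Ideal (MvPolynomial (Fin e) k))
    (h1hom : IsHomogeneousIdeal k e I1) (h2hom : IsHomogeneousIdeal k e I2)
    (h1q2 : I1 ≤ qIdeal k e ^ 2) (h2q2 : I2 ≤ qIdeal k e ^ 2)
    (h1gor : HasTypeOne k e I1) (h2gor : HasTypeOne k e I2)
    (s1 s2 s : ℕ)
    (hs1 : SocDeg k e I1 s1) (hs2 : SocDeg k e I2 s2)
    (h1c : CompressedGor k e I1 s1) (h2c : CompressedGor k e I2 s2)
    (htype2 : HasTypeTwo k e (I1 ⊓ I2))
    (hs : SocDeg k e (I1 ⊓ I2) s)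
    -- `R` is compressed
    (hcomp : ∃ b ≤ s, ∀ i,
      hilb k e (I1 ⊓ I2) i = min (hQ e i) (hQat e b i + hQat e s i))
    (hcase : s1 = 2 ∨ (s1 = 3 ∧ s2 = 3)) :
    I1 + I2 = qIdeal k e ^ 2 := by
  refine le_antisymm (sup_le h1q2 h2q2) ?_
  rcases hcase with rfl | ⟨rfl, rfl⟩
  · exact qIdeal_sq_le_sup_of_socDeg_eq_two h1hom.isHomogeneous h2hom.isHomogeneous h2q2 h2gor
      hs1 h1c htype2
  · exact qIdeal_sq_le_sup_of_socDeg_eq_three he h1hom.isHomogeneous h2hom.isHomogeneous h1gor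
      h2gor hs1 hs2 h1c h2c htype2 hs hcomp

/-- In the setup of two homogeneous compressed Gorenstein
ideals `I1, I2` in `e ≥ 3` variables with `R = Q/(I1 ∩ I2)` compressed of type
2: if the socle degrees satisfy `s1 = 2`, or `s1 = 3 = s2`, then
`Q/(I1 + I2) = Q/q^2`, i.e. `I1 + I2 = q^2`. -/
theorem stmt14 (k : Type*) [Field k] (e : ℕ) (he : 3 ≤ e)
    (I1 I2 : Ideal (MvPolynomial (Fin e) k))
    (h1hom : IsHomogeneousIdeal k e I1) (h2hom : IsHomogeneousIdeal k e I2)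
    (h1p : I1.IsPrimary) (h1r : I1.radical = qIdeal k e)
    (h2p : I2.IsPrimary) (h2r : I2.radical = qIdeal k e)
    (h1q2 : I1 ≤ qIdeal k e ^ 2) (h2q2 : I2 ≤ qIdeal k e ^ 2)
    (h1gor : HasTypeOne k e I1) (h2gor : HasTypeOne k e I2)
    (s1 s2 s : ℕ)
    (hs1 : SocDeg k e I1 s1) (hs2 : SocDeg k e I2 s2) (hle : s1 ≤ s2)
    (h1c : CompressedGor k e I1 s1) (h2c : CompressedGor k e I2 s2)
    (htype2 : HasTypeTwo k e (I1 ⊓ I2))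
    (hs : SocDeg k e (I1 ⊓ I2) s)
    -- `R` is compressed
    (hcomp : ∃ b ≤ s, ∀ i,
      hilb k e (I1 ⊓ I2) i = min (hQ e i) (hQat e b i + hQat e s i))
    (hcase : s1 = 2 ∨ (s1 = 3 ∧ s2 = 3)) :
    I1 + I2 = qIdeal k e ^ 2 :=
  stmt14_general k e he I1 I2 h1hom h2hom h1q2 h2q2 h1gor h2gor s1 s2 s hs1 hs2 h1c h2c htype2 hs
    hcomp hcase
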